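/- arXiv:1407.8106 — 5 statements merged into one kernel-verified Lean document; each statement's English description precedes it below -/
import Mathlib

section
/- Let H be a group, let K₁ and K₂ be subgroups of H of finite indices k₁ and k₂ with gcd(k₁, k₂) = 1, and let K₁′ be a normal subgroup of H of index k₁. If K₁ ∩ K₂ = K₁′ ∩ K₂, then K₁ = K₁′. -/
/-!
Counting the index of `K₁ ⊓ K₂` in two ways shows that coprime indices force
`[K₁ : K₁ ⊓ K₂] = [H : K₂]`. Since `K₁ ⊓ K₂ ≤ K₁'`, the index `[K₁ : K₁ ⊓ K₁']` divides
`[H : K₂]`; by normality of `K₁'` it also divides `[H : K₁']`, so it is `1` and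
`K₁ ≤ K₁'`. Equal finite indices then give equality.
-/

namespace Subgroup

variable {G : Type*} [Group G] {A B N : Subgroup G}

theorem relIndex_eq_index_of_coprime (hB : B.index ≠ 0) (hco : A.index.Coprime B.index) :
    B.relIndex A = B.index := by
  have hmul : B.relIndex A * A.index = A.relIndex B * B.index := by
    rw [← inf_relIndex_right, relIndex_mul_index inf_le_right, ← inf_relIndex_right,
      relIndex_mul_index inf_le_right, inf_comm]
  have hdvd : B.index ∣ B.relIndex A :=
    hco.symm.dvd_of_dvd_mul_right (hmul ▸ dvd_mul_left _ _)
  have hle : B.relIndex A ≤ B.index :=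
    B.relIndex_top_right ▸ relIndex_le_of_le_right le_top (B.relIndex_top_right ▸ hB)
  have hpos : 0 < B.relIndex A := Nat.pos_of_ne_zero (mt index_eq_zero_of_relIndex_eq_zero hB)
  exact le_antisymm hle (Nat.le_of_dvd hpos hdvd)

theorem le_of_inf_le_of_coprime [N.Normal] (hB : B.index ≠ 0) (hAB : A.index.Coprime B.index)
    (hNB : N.index.Coprime B.index) (hle : A ⊓ B ≤ N) : A ≤ N := by
  have hdvd : N.relIndex A ∣ B.index :=
    relIndex_eq_index_of_coprime hB hAB ▸ inf_relIndex_left A B ▸ relIndex_dvd_of_le_left A hle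
  exact relIndex_eq_one.mp <| Nat.eq_one_of_dvd_coprimes hNB (relIndex_dvd_index_of_normal N A) hdvd

theorem eq_of_le_of_index_eq (hle : A ≤ N) (hA : A.index ≠ 0) (h : A.index = N.index) :
    A = N := by
  have hmul : A.relIndex N * N.index = 1 * N.index := by
    rw [one_mul, relIndex_mul_index hle, h]
  exact le_antisymm hle <| relIndex_eq_one.mp <|
    Nat.eq_of_mul_eq_mul_right (Nat.pos_of_ne_zero (h ▸ hA)) hmul

end Subgroup

/-- Let `H` be a group, let `K₁` and `K₂` be subgroups of `H` of finite indices `k₁` and `k₂`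
with `gcd(k₁, k₂) = 1`, and let `K₁'` be a normal subgroup of `H` of index `k₁`.
If `K₁ ⊓ K₂ = K₁' ⊓ K₂`, then `K₁ = K₁'`. -/
theorem eq_of_inf_eq_inf_of_coprime {H : Type*} [Group H] (K₁ K₂ K₁' : Subgroup H)
    (k₁ k₂ : ℕ) (hk₁ : k₁ ≠ 0) (hk₂ : k₂ ≠ 0)
    (h₁ : K₁.index = k₁) (h₂ : K₂.index = k₂) (hco : Nat.gcd k₁ k₂ = 1)
    [K₁'.Normal] (h₁' : K₁'.index = k₁)
    (h : K₁ ⊓ K₂ = K₁' ⊓ K₂) : K₁ = K₁' := by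
  subst h₁ h₂
  have hle : K₁ ≤ K₁' :=
    Subgroup.le_of_inf_le_of_coprime hk₂ hco (h₁' ▸ hco) (h ▸ inf_le_left)
  exact Subgroup.eq_of_le_of_index_eq hle hk₁ h₁'.symm
end

section
/- Let H be a group, let i be a positive integer, and suppose H has only finitely many normal subgroups of index i; write the distinct normal subgroups of index i as K₁, …, Kₘ. Let φ : H → H be an injective group homomorphism such that the image φ(H) has finite index in H and gcd([H : φ(H)], i) = 1. Then there exists a permutation π of {1, …, m} such that φ(Kⱼ) = K_{π(j)} ∩ φ(H) for all j ∈ {1, …, m}. -/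
/-!
For a normal subgroup `N` whose index is coprime to `[H : R]`, the relative index of `N` in `R`
divides `[H : N]` (as `N` is normal) and is divisible by it (as `[H : N ⊓ R] = [R : N ⊓ R][H : R]`),
so `[R : N ⊓ R] = [H : N]`. Hence `N ↦ N.comap φ` preserves normal subgroups of index `i`,
and it is injective on them: if `A ⊓ φ(H) ≤ B`, then `A ⊓ B` has index coprime to `[H : φ(H)]`
and the same relative index in `φ(H)` as `A`, so `A ⊓ B = A`. An injective self-map of the finite
set `{K j}` is a permutation, and `(K j).comap φ` maps back onto `K j ⊓ φ(H)`.
-/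

namespace Subgroup

variable {G G' : Type*} [Group G] [Group G']

theorem relIndex_eq_index_of_coprime_s2 {N : Subgroup G} [N.Normal] {R : Subgroup G}
    (h : N.index.Coprime R.index) : N.relIndex R = N.index := by
  refine Nat.dvd_antisymm (relIndex_dvd_index_of_normal N R) (h.dvd_of_dvd_mul_right ?_)
  rw [← inf_relIndex_right, relIndex_mul_index inf_le_right]
  exact index_dvd_of_le inf_le_left

theorem index_inf_coprime {A B : Subgroup G} [B.Normal] {n : ℕ} (hA : A.index.Coprime n)
    (hB : B.index.Coprime n) : (A ⊓ B).index.Coprime n := by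
  rw [← relIndex_mul_index (inf_le_left : A ⊓ B ≤ A), inf_relIndex_left]
  exact (hB.coprime_dvd_left (relIndex_dvd_index_of_normal B A)).mul_left hA

theorem le_of_inf_le_of_coprime_s2 {A B R : Subgroup G} [A.Normal] [B.Normal] (hA₀ : A.index ≠ 0)
    (hA : A.index.Coprime R.index) (hB : B.index.Coprime R.index) (h : A ⊓ R ≤ B) :
    A ≤ B := by
  have hinf : A ⊓ B ⊓ R = A ⊓ R :=
    le_antisymm (inf_le_inf_right R inf_le_left) (le_inf (le_inf inf_le_left h) inf_le_right)
  have hindex : (A ⊓ B).index = A.index := by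
    rw [← relIndex_eq_index_of_coprime_s2 (index_inf_coprime hA hB),
      ← relIndex_eq_index_of_coprime_s2 hA, ← inf_relIndex_right, hinf, inf_relIndex_right]
  rw [← relIndex_mul_index (inf_le_left : A ⊓ B ≤ A), inf_relIndex_left,
    Nat.mul_eq_right hA₀] at hindex
  exact relIndex_eq_one.mp hindex

theorem index_comap_of_coprime {N : Subgroup G} [N.Normal] (φ : G' →* G)
    (h : N.index.Coprime φ.range.index) : (N.comap φ).index = N.index := by
  rw [index_comap, relIndex_eq_index_of_coprime_s2 h]

theorem eq_of_comap_eq_of_coprime {A B : Subgroup G} [A.Normal] [B.Normal] {φ : G' →* G}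
    (hA₀ : A.index ≠ 0) (hB₀ : B.index ≠ 0) (hA : A.index.Coprime φ.range.index)
    (hB : B.index.Coprime φ.range.index) (h : A.comap φ = B.comap φ) : A = B := by
  have hinf : A ⊓ φ.range = B ⊓ φ.range := by
    simpa only [map_comap_eq, inf_comm] using congrArg (map φ) h
  exact le_antisymm (le_of_inf_le_of_coprime_s2 hA₀ hA hB (hinf ▸ inf_le_left))
    (le_of_inf_le_of_coprime_s2 hB₀ hB hA (hinf.symm ▸ inf_le_left))

end Subgroup

open Subgroup in
theorem exists_perm_map_normal_subgroups_general {H : Type*} [Group H] (i : ℕ) (hi : 0 < i)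
    (m : ℕ) (K : Fin m → Subgroup H) (hKinj : Function.Injective K)
    (hKnorm : ∀ j, (K j).Normal) (hKidx : ∀ j, (K j).index = i)
    (hKall : ∀ N : Subgroup H, N.Normal → N.index = i → ∃ j, N = K j)
    (φ : H →* H)
    (hco : Nat.gcd φ.range.index i = 1) :
    ∃ π : Equiv.Perm (Fin m), ∀ j, (K j).map φ = K (π j) ⊓ φ.range := by
  have hcop : ∀ j, (K j).index.Coprime φ.range.index := fun j => hKidx j ▸ Nat.Coprime.symm hco
  have hpos : ∀ j, (K j).index ≠ 0 := fun j => hKidx j ▸ hi.ne'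
  choose θ hθ using fun j =>
    hKall _ ((hKnorm j).comap φ) ((index_comap_of_coprime φ (hcop j)).trans (hKidx j))
  have hθinj : Function.Injective θ := fun a b hab =>
    hKinj (eq_of_comap_eq_of_coprime (hpos a) (hpos b) (hcop a) (hcop b)
      (by rw [hθ a, hθ b, hab]))
  let e := Equiv.ofBijective θ (Finite.injective_iff_bijective.mp hθinj)
  refine ⟨e.symm, fun j => ?_⟩
  obtain ⟨k, rfl⟩ := e.surjective j
  rw [e.symm_apply_apply, Equiv.ofBijective_apply, ← hθ, map_comap_eq, inf_comm]

/-- Let `H` be a group, `i` a positive integer, and suppose the distinct normal subgroups of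
index `i` in `H` are exactly `K 1, …, K m` (finitely many). Let `φ : H → H` be an injective
group homomorphism whose image has finite index coprime to `i`. Then there is a permutation
`π` of `{1, …, m}` with `φ(K j) = K (π j) ∩ φ(H)` for all `j`. -/
theorem exists_perm_map_normal_subgroups {H : Type*} [Group H] (i : ℕ) (hi : 0 < i)
    (m : ℕ) (K : Fin m → Subgroup H) (hKinj : Function.Injective K)
    (hKnorm : ∀ j, (K j).Normal) (hKidx : ∀ j, (K j).index = i)
    (hKall : ∀ N : Subgroup H, N.Normal → N.index = i → ∃ j, N = K j)
    (φ : H →* H) (hφ : Function.Injective φ)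
    (hfin : φ.range.index ≠ 0) (hco : Nat.gcd φ.range.index i = 1) :
    ∃ π : Equiv.Perm (Fin m), ∀ j, (K j).map φ = K (π j) ⊓ φ.range :=
  exists_perm_map_normal_subgroups_general i hi m K hKinj hKnorm hKidx hKall φ hco
end

section
/- Let L be a lattice in ℚⁿ, i.e. an additive subgroup of ℚⁿ generated by a ℚ-basis of ℚⁿ. Then there exist finitely many primes p₁, …, p_l such that: for every invertible matrix A ∈ GL(n, ℚ) with A(ℤⁿ) ⊆ ℤⁿ and with pⱼ ∤ det(A) for all j ∈ {1, …, l}, there exists an integer k > 0 such that Aᵏ(L) ⊆ L. -/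
/-!
Since `L` and `ℤⁿ` are finitely generated and both span `ℚⁿ` over `ℚ`, there are `N, M > 0` with
`N • L ⊆ ℤⁿ` and `M • ℤⁿ ⊆ L`; take the primes dividing `NM`. An integral `A` whose determinant
is prime to `NM` is invertible modulo `NM`, so it has finite order in the finite group
`GL(n, ℤ/NM)`: `Aᵏ = 1 + NM • C` with `k > 0` and `C` integral. Then for `v ∈ L`,
`Aᵏ v = v + M • C (N • v) ∈ L + M • ℤⁿ ⊆ L`.
-/

open Matrix

section Saturation

variable {V : Type*} [AddCommGroup V]

theorem AddSubgroup.exists_pos_nsmul_closure_le {ι : Type*} [Finite ι] (g : ι → V)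
    (H : AddSubgroup V) (hg : ∀ i, ∃ N : ℕ, 0 < N ∧ N • g i ∈ H) :
    ∃ N : ℕ, 0 < N ∧ ∀ v ∈ closure (Set.range g), N • v ∈ H := by
  cases nonempty_fintype ι
  choose N hN_pos hN using hg
  refine ⟨∏ i, N i, Finset.prod_pos fun i _ => hN_pos i, fun v hv => ?_⟩
  suffices closure (Set.range g) ≤ H.comap (DistribSMul.toAddMonoidHom V (∏ i, N i)) from this hv
  rw [closure_le]
  rintro _ ⟨i, rfl⟩
  obtain ⟨c, hc⟩ := Finset.dvd_prod_of_mem N (Finset.mem_univ i)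
  simpa [hc, mul_nsmul] using H.nsmul_mem (hN i) c

variable [Module ℚ V]

theorem AddSubgroup.exists_pos_nsmul_mem_of_span_eq_top (H : AddSubgroup V)
    (hH : Submodule.span ℚ (H : Set V) = ⊤) (v : V) : ∃ N : ℕ, 0 < N ∧ N • v ∈ H := by
  have hv : v ∈ Submodule.span ℚ (H : Set V) := hH ▸ Submodule.mem_top
  induction hv using Submodule.span_induction with
  | mem x hx => exact ⟨1, one_pos, by simpa using hx⟩
  | zero => exact ⟨1, one_pos, by simp⟩
  | add x y _ _ hx hy =>
    obtain ⟨Nx, hNx_pos, hNx⟩ := hx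
    obtain ⟨Ny, hNy_pos, hNy⟩ := hy
    refine ⟨Nx * Ny, Nat.mul_pos hNx_pos hNy_pos, ?_⟩
    rw [smul_add, mul_nsmul, mul_nsmul']
    exact H.add_mem (H.nsmul_mem hNx Ny) (H.nsmul_mem hNy Nx)
  | smul q x _ hx =>
    obtain ⟨N, hN_pos, hN⟩ := hx
    refine ⟨q.den * N, Nat.mul_pos q.pos hN_pos, ?_⟩
    have hden : q.den • q • x = q.num • x := by
      rw [← Nat.cast_smul_eq_nsmul ℚ, smul_smul, Rat.den_mul_eq_num, Int.cast_smul_eq_zsmul]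
    rw [mul_nsmul, hden, smul_comm]
    exact H.zsmul_mem hN _

theorem Module.Basis.exists_pos_nsmul_closure_le {ι κ : Type*} [Finite ι] (b : Basis ι ℚ V)
    (b' : Basis κ ℚ V) :
    ∃ N : ℕ, 0 < N ∧ ∀ v ∈ AddSubgroup.closure (Set.range b),
      N • v ∈ AddSubgroup.closure (Set.range b') := by
  have hspan : Submodule.span ℚ (AddSubgroup.closure (Set.range b') : Set V) = ⊤ :=
    eq_top_iff.2 (b'.span_eq ▸ Submodule.span_mono AddSubgroup.subset_closure)
  exact AddSubgroup.exists_pos_nsmul_closure_le b _ fun i =>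
    AddSubgroup.exists_pos_nsmul_mem_of_span_eq_top _ hspan (b i)

end Saturation

section IntLattice

variable {ι : Type*} [Fintype ι]

variable (ι) in
def intLattice : AddSubgroup (ι → ℚ) :=
  AddSubgroup.closure (Set.range (Pi.basisFun ℚ ι))

theorem mem_intLattice_iff {v : ι → ℚ} : v ∈ intLattice ι ↔ ∀ i, ∃ m : ℤ, v i = m := by
  rw [intLattice, ← Submodule.span_int_eq_addSubgroupClosure, Submodule.mem_toAddSubgroup,
    Module.Basis.mem_span_iff_repr_mem]
  simp [eq_comm]

theorem map_intCast_mulVec_mem_intLattice (C : Matrix ι ι ℤ) {v : ι → ℚ}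
    (hv : v ∈ intLattice ι) : C.map (Int.cast : ℤ → ℚ) *ᵥ v ∈ intLattice ι := by
  choose u hu using mem_intLattice_iff.1 hv
  obtain rfl : v = Int.cast ∘ u := funext hu
  exact mem_intLattice_iff.2 fun i => ⟨(C *ᵥ u) i, ((Int.castRingHom ℚ).map_mulVec C u i).symm⟩

variable [DecidableEq ι]

theorem exists_map_intCast_eq_of_mulVec_mem_intLattice (A : Matrix ι ι ℚ)
    (hA : ∀ v ∈ intLattice ι, A *ᵥ v ∈ intLattice ι) :
    ∃ B : Matrix ι ι ℤ, B.map (Int.cast : ℤ → ℚ) = A := by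
  have hcol j : A *ᵥ Pi.single j 1 ∈ intLattice ι :=
    hA _ (AddSubgroup.subset_closure ⟨j, Pi.basisFun_apply ℚ ι j⟩)
  simp only [mulVec_single_one, mem_intLattice_iff, col_apply] at hcol
  choose B hB using hcol
  exact ⟨of fun i j => B j i, by ext i j; simp [hB]⟩

theorem map_one_add_smul_mulVec_mem {L : AddSubgroup (ι → ℚ)} {N M : ℕ}
    (hN : ∀ v ∈ L, N • v ∈ intLattice ι) (hM : ∀ v ∈ intLattice ι, M • v ∈ L)
    (C : Matrix ι ι ℤ) {v : ι → ℚ} (hv : v ∈ L) :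
    (1 + ((N * M : ℕ) : ℤ) • C).map (Int.cast : ℤ → ℚ) *ᵥ v ∈ L := by
  have hsplit : (1 + ((N * M : ℕ) : ℤ) • C).map (Int.cast : ℤ → ℚ) *ᵥ v
      = v + M • (C.map (Int.cast : ℤ → ℚ) *ᵥ (N • v)) := by
    rw [Matrix.map_add _ Int.cast_add, Matrix.map_one Int.cast Int.cast_zero Int.cast_one,
      add_mulVec, one_mulVec, mulVec_smul, ← mul_nsmul', ← Nat.cast_smul_eq_nsmul ℚ, ← smul_mulVec]
    congr 2
    ext i j
    simp only [map_apply, Matrix.smul_apply, smul_eq_mul]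
    push_cast
    ring
  rw [hsplit]
  exact L.add_mem hv (hM _ (map_intCast_mulVec_mem_intLattice C (hN v hv)))

theorem Matrix.exists_pow_eq_one_add_smul_of_isUnit_det (B : Matrix ι ι ℤ) {D : ℕ} [NeZero D]
    (hB : IsUnit (B.det : ZMod D)) : ∃ k, 0 < k ∧ ∃ C : Matrix ι ι ℤ, B ^ k = 1 + (D : ℤ) • C := by
  have hunit : IsUnit (B.map (Int.castRingHom (ZMod D))) := by
    rwa [isUnit_iff_isUnit_det, Int.coe_castRingHom, ← Int.cast_det]
  obtain ⟨k, hk, hBk⟩ := hunit.isOfFinOrder.exists_pow_eq_one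
  refine ⟨k, hk, ?_⟩
  have hdvd i j : (D : ℤ) ∣ (B ^ k - 1) i j := by
    rw [← ZMod.intCast_zmod_eq_zero_iff_dvd]
    have := congrFun₂ hBk i j
    rw [← Matrix.map_pow] at this
    simpa [sub_apply, one_apply, apply_ite (Int.cast : ℤ → ZMod D), sub_eq_zero] using this
  choose C hC using hdvd
  exact ⟨of C, by ext i j; simp [← hC]⟩

end IntLattice

theorem isUnit_intCast_zmod_of_forall_not_dvd {d : ℤ} {D : ℕ} (hD : D ≠ 0)
    (h : ∀ p ∈ D.primeFactorsList, ¬ (p : ℤ) ∣ d) : IsUnit (d : ZMod D) := by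
  rw [ZMod.coe_int_isUnit_iff_isCoprime, Int.isCoprime_iff_nat_coprime]
  refine Nat.coprime_of_dvd fun p hp hpD hpd => h p ?_ (Int.natCast_dvd.2 hpd)
  exact (Nat.mem_primeFactorsList hD).2 ⟨hp, by simpa using hpD⟩

/-- Let `L` be a lattice in `ℚⁿ`, i.e. the additive subgroup generated by a `ℚ`-basis of `ℚⁿ`.
Then there exist finitely many primes `p₁, …, p_l` such that for every `A ∈ GL(n, ℚ)` with
`A(ℤⁿ) ⊆ ℤⁿ` and `pⱼ ∤ det A` for all `j`, there is `k > 0` with `Aᵏ(L) ⊆ L`. -/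
theorem exists_primes_pow_maps_lattice (n : ℕ) (b : Module.Basis (Fin n) ℚ (Fin n → ℚ))
    (L : AddSubgroup (Fin n → ℚ)) (hL : L = AddSubgroup.closure (Set.range b)) :
    ∃ (l : ℕ) (p : Fin l → ℕ), (∀ j, (p j).Prime) ∧
      ∀ A : GL (Fin n) ℚ,
        (∀ v : Fin n → ℚ, (∀ i, ∃ m : ℤ, v i = (m : ℚ)) →
          ∀ i, ∃ m : ℤ, (A : Matrix (Fin n) (Fin n) ℚ).mulVec v i = (m : ℚ)) →
        (∀ d : ℤ, (A : Matrix (Fin n) (Fin n) ℚ).det = (d : ℚ) → ∀ j, ¬ ((p j : ℤ) ∣ d)) →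
        ∃ k : ℕ, 0 < k ∧ ∀ v ∈ L,
          ((A ^ k : GL (Fin n) ℚ) : Matrix (Fin n) (Fin n) ℚ).mulVec v ∈ L := by
  subst hL
  obtain ⟨N, hN_pos, hN⟩ := b.exists_pos_nsmul_closure_le (Pi.basisFun ℚ (Fin n))
  obtain ⟨M, hM_pos, hM⟩ := (Pi.basisFun ℚ (Fin n)).exists_pos_nsmul_closure_le b
  have hNM : N * M ≠ 0 := (Nat.mul_pos hN_pos hM_pos).ne'
  have : NeZero (N * M) := ⟨hNM⟩
  set P := (N * M).primeFactorsList
  refine ⟨P.length, P.get, fun j => Nat.prime_of_mem_primeFactorsList (P.get_mem j), ?_⟩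
  intro A hA hdet
  obtain ⟨B, hB⟩ := exists_map_intCast_eq_of_mulVec_mem_intLattice (A : Matrix (Fin n) (Fin n) ℚ)
    fun v hv => mem_intLattice_iff.2 (hA v (mem_intLattice_iff.1 hv))
  have hdetB : IsUnit (B.det : ZMod (N * M)) := by
    refine isUnit_intCast_zmod_of_forall_not_dvd hNM fun p hp => ?_
    obtain ⟨j, rfl⟩ := List.mem_iff_get.1 hp
    exact hdet B.det (by rw [← hB, Int.cast_det]) j
  obtain ⟨k, hk, C, hC⟩ := B.exists_pow_eq_one_add_smul_of_isUnit_det hdetB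
  refine ⟨k, hk, fun v hv => ?_⟩
  have hpow : B.map (Int.cast : ℤ → ℚ) ^ k = (B ^ k).map Int.cast :=
    (B.map_pow (Int.castRingHom ℚ) k).symm
  rw [Units.val_pow_eq_pow_val, ← hB, hpow, hC]
  exact map_one_add_smul_mulVec_mem hN hM C hv
end

section
/- Let L be a finite-dimensional Lie algebra over ℚ and let φ be a Lie algebra automorphism of L whose ℂ-linear extension is diagonalizable. Then there exists a Lie algebra automorphism η of L such that the characteristic polynomial of η splits over ℚ (all eigenvalues of η are rational), η commutes with every Lie algebra automorphism of L that commutes with φ, and moreover: if every complex root of the characteristic polynomial of φ has absolute value strictly greater than 1, then every complex root of the characteristic polynomial of η has absolute value strictly greater than 1. -/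
/-!
Let `K ⊆ ℂ` be the field generated by the eigenvalues of `φ`; it is Galois over `ℚ`. Replace each
eigenvalue `c` by its norm `N_{K/ℚ}(c)`: this is a nonzero rational number, of absolute value
`> 1` when all eigenvalues are, and `N(cd) = N(c) N(d)`. As the norm is constant on Galois orbits,
the Lagrange interpolant over `K` of `c ↦ N(c)` has rational coefficients, giving `p ∈ ℚ[X]`, and
`η := p(φ)` commutes with everything commuting with `φ`. Over `ℂ`, `φ` is diagonalizable and
`[E_c, E_d] ⊆ E_{cd}` for its eigenspaces, so multiplicativity of `N` makes `p(φ)` preserve the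
bracket; its eigenvalues `N(c)` are nonzero, so it is invertible.
-/

open Polynomial Module.End TensorProduct

theorem exists_aeval_eq_of_forall_algEquiv {F K : Type*} [Field F] [Field K] [Algebra F K]
    [FiniteDimensional F K] [IsGalois F K] (s : Finset K)
    (hs : ∀ σ : Gal(K/F), ∀ t ∈ s, σ t ∈ s) (v : K → F)
    (hv : ∀ σ : Gal(K/F), ∀ t ∈ s, v (σ t) = v t) :
    ∃ p : F[X], ∀ t ∈ s, aeval t p = algebraMap F K (v t) := by
  classical
  have hinj : Set.InjOn id (s : Set K) := Set.injOn_id _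
  set P := Lagrange.interpolate s id (fun t => algebraMap F K (v t))
  have hP : ∀ t ∈ s, P.eval t = algebraMap F K (v t) := fun t ht =>
    Lagrange.eval_interpolate_at_node _ hinj ht
  -- `P.map σ` interpolates the same data as `P`, so it is `P`.
  have hfix : ∀ σ : Gal(K/F), P.map (σ : K →+* K) = P := fun σ =>
    Lagrange.eq_interpolate_of_eval_eq _ hinj
      (by rw [degree_map]; exact Lagrange.degree_interpolate_lt _ hinj) fun t ht => by
        have hσt : σ.symm t ∈ s := hs σ.symm t ht
        have := eval_map_apply (p := P) (f := (σ : K →+* K)) (σ.symm t)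
        simp only [RingHom.coe_coe, AlgEquiv.apply_symm_apply] at this
        simp [this, hP _ hσt, hv σ.symm t ht]
  obtain ⟨p, hp⟩ := (mem_lifts P).1 <| (lifts_iff_coeff_lifts P).2 fun n =>
    (IsGalois.mem_range_algebraMap_iff_fixed _).2 fun σ => by
      conv_rhs => rw [← hfix σ]
      rw [coeff_map]
      rfl
  exact ⟨p, fun t ht => by rw [← hP t ht, ← hp, eval_map_algebraMap]⟩

theorem one_lt_norm_algebraMap_norm {F K : Type*} [Field F] [Field K] [Algebra F K]
    [Algebra F ℂ] [FiniteDimensional F K] [Algebra.IsSeparable F K] {q : F[X]}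
    (hq : ∀ z : ℂ, (q.map (algebraMap F ℂ)).IsRoot z → 1 < ‖z‖) {t : K} (ht : aeval t q = 0) :
    1 < ‖algebraMap F ℂ (Algebra.norm F t)‖ := by
  rw [Algebra.norm_eq_prod_embeddings F ℂ t, norm_prod]
  have : Nonempty (K →ₐ[F] ℂ) := ⟨IsAlgClosed.lift⟩
  simpa using Finset.prod_lt_prod_of_nonempty (f := 1) (fun _ _ => one_pos)
    (fun (σ : K →ₐ[F] ℂ) _ => hq (σ t)
      (by rw [IsRoot, eval_map_algebraMap, aeval_algHom_apply, ht, map_zero]))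
    Finset.univ_nonempty

noncomputable abbrev rootField (q : ℚ[X]) : IntermediateField ℚ ℂ :=
  IntermediateField.adjoin ℚ (q.rootSet ℂ)

instance (q : ℚ[X]) : IsSplittingField ℚ (rootField q) q :=
  IntermediateField.adjoin_rootSet_isSplittingField (IsAlgClosed.splits _)

instance (q : ℚ[X]) : FiniteDimensional ℚ (rootField q) :=
  IsSplittingField.finiteDimensional _ q

instance (q : ℚ[X]) : IsGalois ℚ (rootField q) where
  to_normal := Normal.of_isSplittingField q

theorem exists_aeval_eq_norm (q : ℚ[X]) (hq : q ≠ 0) :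
    ∃ p : ℚ[X], ∀ t : rootField q, aeval t q = 0 →
      aeval (t : ℂ) p = algebraMap ℚ ℂ (Algebra.norm ℚ t) := by
  classical
  have hroot : ∀ t : rootField q, t ∈ (q.aroots (rootField q)).toFinset ↔ aeval t q = 0 := by
    simp [hq]
  obtain ⟨p, hp⟩ := exists_aeval_eq_of_forall_algEquiv (q.aroots (rootField q)).toFinset
    (fun σ t ht => by
      rw [hroot] at ht ⊢
      rw [← AlgEquiv.coe_toAlgHom, aeval_algHom_apply, ht, map_zero])
    (Algebra.norm ℚ) (fun σ t _ => Algebra.norm_eq_of_algEquiv σ t)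
  refine ⟨p, fun t ht => ?_⟩
  rw [← IntermediateField.algebraMap_apply, aeval_algebraMap_apply, hp t ((hroot t).2 ht),
    ← IsScalarTower.algebraMap_apply]

theorem exists_aeval_multiplicative_on_roots (q : ℚ[X]) (h0 : ¬ q.IsRoot 0) :
    ∃ p : ℚ[X],
      (∀ z w : ℂ, (q.map (algebraMap ℚ ℂ)).IsRoot z → (q.map (algebraMap ℚ ℂ)).IsRoot w →
        (q.map (algebraMap ℚ ℂ)).IsRoot (z * w) → aeval (z * w) p = aeval z p * aeval w p) ∧
      (∀ z : ℂ, (q.map (algebraMap ℚ ℂ)).IsRoot z → aeval z p ≠ 0) ∧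
      (∀ z : ℂ, (q.map (algebraMap ℚ ℂ)).IsRoot z → ∃ a : ℚ, algebraMap ℚ ℂ a = aeval z p) ∧
      ((∀ z : ℂ, (q.map (algebraMap ℚ ℂ)).IsRoot z → 1 < ‖z‖) →
        ∀ z : ℂ, (q.map (algebraMap ℚ ℂ)).IsRoot z → 1 < ‖aeval z p‖) := by
  have hq : q ≠ 0 := by rintro rfl; exact h0 (by simp)
  obtain ⟨p, hp⟩ := exists_aeval_eq_norm q hq
  have hlift : ∀ z : ℂ, (q.map (algebraMap ℚ ℂ)).IsRoot z →
      ∃ t : rootField q, (t : ℂ) = z ∧ aeval t q = 0 := by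
    intro z hz
    have hz' : aeval z q = 0 := by rwa [IsRoot, eval_map_algebraMap] at hz
    refine ⟨⟨z, IntermediateField.subset_adjoin ℚ _ (mem_rootSet.2 ⟨hq, hz'⟩)⟩, rfl, ?_⟩
    apply FaithfulSMul.algebraMap_injective (rootField q) ℂ
    rw [map_zero, ← aeval_algebraMap_apply]
    exact hz'
  refine ⟨p, fun z w hz hw hzw => ?_, fun z hz => ?_, fun z hz => ?_, fun hexp z hz => ?_⟩
  · obtain ⟨t, rfl, ht⟩ := hlift z hz
    obtain ⟨s, rfl, hs⟩ := hlift w hw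
    obtain ⟨u, hu, hu0⟩ := hlift _ hzw
    obtain rfl : u = t * s := Subtype.ext hu
    rw [← IntermediateField.coe_mul, hp _ hu0, hp t ht, hp s hs, map_mul, map_mul]
  · obtain ⟨t, rfl, ht⟩ := hlift z hz
    have ht0 : t ≠ 0 := by
      rintro rfl
      rw [← coeff_zero_eq_aeval_zero', coeff_zero_eq_eval_zero, map_eq_zero] at ht
      exact h0 ht
    rw [hp t ht, Ne, map_eq_zero]
    exact Algebra.norm_ne_zero_iff.2 ht0
  · obtain ⟨t, rfl, ht⟩ := hlift z hz
    exact ⟨_, (hp t ht).symm⟩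
  · obtain ⟨t, rfl, ht⟩ := hlift z hz
    rw [hp t ht]
    exact one_lt_norm_algebraMap_norm hexp ht

theorem LinearMap.isRoot_charpoly_zero_iff {F V : Type*} [Field F] [AddCommGroup V] [Module F V]
    [FiniteDimensional F V] {f : Module.End F V} :
    f.charpoly.IsRoot 0 ↔ ¬ Function.Injective f := by
  rw [← hasEigenvalue_iff_isRoot_charpoly, hasEigenvalue_iff, eigenspace_zero, Ne,
    LinearMap.ker_eq_bot]

theorem LinearMap.baseChange_aeval {R A M : Type*} [CommRing R] [CommRing A] [Algebra R A]
    [AddCommGroup M] [Module R M] (f : Module.End R M) (p : R[X]) :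
    (aeval f p).baseChange A = aeval (f.baseChange A) (p.map (algebraMap R A)) := by
  rw [aeval_map_algebraMap]
  exact (aeval_algHom_apply (Module.End.baseChangeHom R A M) f p).symm

theorem exists_isRoot_eq_aeval_of_isRoot_charpoly_aeval {F K V : Type*} [Field F] [Field K]
    [IsAlgClosed K] [Algebra F K] [AddCommGroup V] [Module F V] [FiniteDimensional F V]
    (f : Module.End F V) (p : F[X]) {z : K}
    (hz : ((aeval f p).charpoly.map (algebraMap F K)).IsRoot z) :
    ∃ c : K, (f.charpoly.map (algebraMap F K)).IsRoot c ∧ aeval c p = z := by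
  set g := f.baseChange K
  rw [← LinearMap.charpoly_baseChange, LinearMap.baseChange_aeval,
    ← hasEigenvalue_iff_isRoot_charpoly, hasEigenvalue_iff_mem_spectrum] at hz
  have : Nontrivial (K ⊗[F] V) := by
    by_contra h
    rw [not_nontrivial_iff_subsingleton] at h
    simp [spectrum.of_subsingleton] at hz
  obtain ⟨c₀, hc₀⟩ := exists_eigenvalue g
  rw [spectrum.map_polynomial_aeval_of_nonempty g _ ⟨c₀, hasEigenvalue_iff_mem_spectrum.1 hc₀⟩]
    at hz
  obtain ⟨c, hc, rfl⟩ := hz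
  refine ⟨c, ?_, (eval_map_algebraMap _ _).symm⟩
  rw [← LinearMap.charpoly_baseChange, ← hasEigenvalue_iff_isRoot_charpoly]
  exact hasEigenvalue_iff_mem_spectrum.2 hc

theorem lie_mem_eigenspace_mul {K M : Type*} [Field K] [LieRing M] [LieAlgebra K M]
    {g : Module.End K M} (hg : ∀ u v, g ⁅u, v⁆ = ⁅g u, g v⁆) {c d : K} {u v : M}
    (hu : u ∈ g.eigenspace c) (hv : v ∈ g.eigenspace d) : ⁅u, v⁆ ∈ g.eigenspace (c * d) := by
  rw [mem_eigenspace_iff] at hu hv ⊢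
  rw [hg, hu, hv, smul_lie, lie_smul, smul_smul]

theorem aeval_lie_of_eval_mul {K M : Type*} [Field K] [LieRing M] [LieAlgebra K M]
    {g : Module.End K M} (hg : ∀ u v, g ⁅u, v⁆ = ⁅g u, g v⁆) (hdiag : ⨆ μ, g.eigenspace μ = ⊤)
    {P : K[X]} (hP : ∀ c d, g.HasEigenvalue c → g.HasEigenvalue d → g.HasEigenvalue (c * d) →
      P.eval (c * d) = P.eval c * P.eval d) (u v : M) :
    aeval g P ⁅u, v⁆ = ⁅aeval g P u, aeval g P v⁆ := by
  have heigen : ∀ c d u v, u ∈ g.eigenspace c → v ∈ g.eigenspace d →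
      aeval g P ⁅u, v⁆ = ⁅aeval g P u, aeval g P v⁆ := by
    intro c d u v hu hv
    have huv := lie_mem_eigenspace_mul hg hu hv
    rw [aeval_apply_of_mem_apply_eq_smul (mem_eigenspace_iff.1 hu),
      aeval_apply_of_mem_apply_eq_smul (mem_eigenspace_iff.1 hv),
      aeval_apply_of_mem_apply_eq_smul (mem_eigenspace_iff.1 huv), smul_lie, lie_smul, smul_smul]
    rcases eq_or_ne ⁅u, v⁆ 0 with h | h
    · simp [h]
    · have hu0 : u ≠ 0 := by rintro rfl; simp at h
      have hv0 : v ≠ 0 := by rintro rfl; simp at h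
      rw [hP c d (hasEigenvalue_of_hasEigenvector ⟨hu, hu0⟩)
        (hasEigenvalue_of_hasEigenvector ⟨hv, hv0⟩) (hasEigenvalue_of_hasEigenvector ⟨huv, h⟩)]
  have hmem : ∀ x, x ∈ ⨆ μ, g.eigenspace μ := fun x => hdiag ▸ Submodule.mem_top
  refine Submodule.iSup_induction _ (motive := fun u => ∀ v,
    aeval g P ⁅u, v⁆ = ⁅aeval g P u, aeval g P v⁆) (hmem u) (fun c u hu v => ?_) (by simp)
    (fun u w hu hw v => by simp only [add_lie, map_add, hu v, hw v]) v
  exact Submodule.iSup_induction _ (motive := fun v =>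
    aeval g P ⁅u, v⁆ = ⁅aeval g P u, aeval g P v⁆) (hmem v) (fun d v hv => heigen c d u v hu hv)
    (by simp) (fun v w hv hw => by simp only [lie_add, map_add, hv, hw])

theorem LieHom.baseChange_lie {R A L L' : Type*} [CommRing R] [CommRing A] [Algebra R A]
    [LieRing L] [LieAlgebra R L] [LieRing L'] [LieAlgebra R L'] (f : L →ₗ⁅R⁆ L')
    (u v : A ⊗[R] L) :
    f.toLinearMap.baseChange A ⁅u, v⁆ =
      ⁅f.toLinearMap.baseChange A u, f.toLinearMap.baseChange A v⁆ :=
  (LieAlgebra.ExtendScalars.map (AlgHom.id R A) f).map_lie u v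

theorem LinearMap.map_lie_of_baseChange {F K L : Type*} [Field F] [Field K] [Algebra F K]
    [LieRing L] [LieAlgebra F L] (f : L →ₗ[F] L)
    (hf : ∀ u v : K ⊗[F] L, f.baseChange K ⁅u, v⁆ = ⁅f.baseChange K u, f.baseChange K v⁆)
    (x y : L) : f ⁅x, y⁆ = ⁅f x, f y⁆ := by
  refine Module.Flat.tensorProduct_mk_injective (R := F) (S := K) (M := L) ?_
  simpa [LieAlgebra.ExtendScalars.bracket_tmul] using hf (1 ⊗ₜ x) (1 ⊗ₜ y)

theorem exists_lieEquiv_toLinearMap_eq_aeval {F K L : Type*} [Field F] [Field K] [IsAlgClosed K]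
    [Algebra F K] [LieRing L] [LieAlgebra F L] [FiniteDimensional F L] (φ : L →ₗ⁅F⁆ L)
    (hdiag : ⨆ μ : K, eigenspace (φ.toLinearMap.baseChange K) μ = ⊤) {p : F[X]}
    (hmul : ∀ c d : K, (φ.toLinearMap.charpoly.map (algebraMap F K)).IsRoot c →
      (φ.toLinearMap.charpoly.map (algebraMap F K)).IsRoot d →
      (φ.toLinearMap.charpoly.map (algebraMap F K)).IsRoot (c * d) →
      aeval (c * d) p = aeval c p * aeval d p)
    (hne : ∀ c : K, (φ.toLinearMap.charpoly.map (algebraMap F K)).IsRoot c → aeval c p ≠ 0) :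
    ∃ η : L ≃ₗ⁅F⁆ L, η.toLieHom.toLinearMap = aeval φ.toLinearMap p := by
  set f := φ.toLinearMap
  have hroot : ∀ c : K, HasEigenvalue (f.baseChange K) c →
      (f.charpoly.map (algebraMap F K)).IsRoot c := fun c hc => by
    rwa [hasEigenvalue_iff_isRoot_charpoly, LinearMap.charpoly_baseChange] at hc
  have hlie : ∀ x y, aeval f p ⁅x, y⁆ = ⁅aeval f p x, aeval f p y⁆ :=
    (aeval f p).map_lie_of_baseChange (K := K) fun u v => by
      rw [LinearMap.baseChange_aeval]
      refine aeval_lie_of_eval_mul φ.baseChange_lie hdiag (fun c d hc hd hcd => ?_) u v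
      simp only [eval_map_algebraMap]
      exact hmul c d (hroot c hc) (hroot d hd) (hroot _ hcd)
  have hinj : Function.Injective (aeval f p) := by
    by_contra h
    obtain ⟨c, hc, hc0⟩ := exists_isRoot_eq_aeval_of_isRoot_charpoly_aeval f p (z := (0 : K))
      (by simpa using (LinearMap.isRoot_charpoly_zero_iff.2 h).map (f := algebraMap F K))
    exact hne c hc hc0
  exact ⟨LieEquiv.ofBijective { aeval f p with map_lie' := hlie _ _ }
    ⟨hinj, LinearMap.injective_iff_surjective.1 hinj⟩, rfl⟩

/-- Let `L` be a finite-dimensional Lie algebra over `ℚ` and `φ` a Lie algebra automorphism of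
`L` whose `ℂ`-linear extension is diagonalizable. Then there exists a Lie algebra automorphism
`η` of `L` whose characteristic polynomial splits over `ℚ`, which commutes with every
automorphism commuting with `φ`, and which is expanding whenever `φ` is expanding. -/
theorem exists_rational_automorphism_commuting {L : Type*} [LieRing L] [LieAlgebra ℚ L]
    [Module.Finite ℚ L] (φ : L ≃ₗ⁅ℚ⁆ L)
    (hdiag : ⨆ μ : ℂ,
      Module.End.eigenspace (LinearMap.baseChange ℂ φ.toLieHom.toLinearMap) μ = ⊤) :
    ∃ η : L ≃ₗ⁅ℚ⁆ L,
      Polynomial.Splits ((LinearMap.charpoly η.toLieHom.toLinearMap).map (RingHom.id ℚ)) ∧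
      (∀ ψ : L ≃ₗ⁅ℚ⁆ L, (∀ x, ψ (φ x) = φ (ψ x)) → ∀ x, ψ (η x) = η (ψ x)) ∧
      ((∀ z : ℂ,
          ((LinearMap.charpoly φ.toLieHom.toLinearMap).map (algebraMap ℚ ℂ)).IsRoot z →
            1 < ‖z‖) →
        ∀ z : ℂ,
          ((LinearMap.charpoly η.toLieHom.toLinearMap).map (algebraMap ℚ ℂ)).IsRoot z →
            1 < ‖z‖) := by
  set f := φ.toLieHom.toLinearMap
  obtain ⟨p, hmul, hne, hrat, hexp⟩ := exists_aeval_multiplicative_on_roots f.charpoly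
    fun h => LinearMap.isRoot_charpoly_zero_iff.1 h φ.injective
  obtain ⟨η, hη⟩ := exists_lieEquiv_toLinearMap_eq_aeval φ.toLieHom hdiag hmul hne
  have hroots : ∀ z : ℂ, (η.toLieHom.toLinearMap.charpoly.map (algebraMap ℚ ℂ)).IsRoot z →
      ∃ c : ℂ, (f.charpoly.map (algebraMap ℚ ℂ)).IsRoot c ∧ aeval c p = z := fun z hz =>
    exists_isRoot_eq_aeval_of_isRoot_charpoly_aeval f p (hη ▸ hz)
  refine ⟨η, ?_, fun ψ hψ x => ?_, fun h z hz => ?_⟩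
  · rw [Polynomial.map_id]
    refine Splits.of_splits_map_of_injective (algebraMap ℚ ℂ).injective (IsAlgClosed.splits _)
      fun z hz => ?_
    obtain ⟨c, hc, rfl⟩ := hroots z (mem_roots'.1 hz).2
    exact hrat c hc
  · have hcomm : Commute ψ.toLieHom.toLinearMap η.toLieHom.toLinearMap := hη ▸
      Algebra.commute_of_mem_adjoin_singleton_of_commute (aeval_mem_adjoin_singleton ℚ f)
        (LinearMap.ext hψ)
    exact LinearMap.congr_fun hcomm x
  · obtain ⟨c, hc, rfl⟩ := hroots z hz
    exact hexp h c hc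
end

section
/- Let H be a group and let K be a normal subgroup of H that is injectively characteristic, i.e. φ(K) ⊆ K for every injective group homomorphism φ : H → H. If both K and the quotient group H/K are co-Hopfian, then H is co-Hopfian. -/
/-!
An injective `φ : H →* H` maps `K` into itself, so it restricts to an injective endomorphism
of `K`; co-Hopficity of `K` gives `φ(K) = K`. Then `φ⁻¹(K) = K`, so `φ` induces an injective
endomorphism of `H ⧸ K`, which is onto since `H ⧸ K` is co-Hopfian. A preimage of `h` modulo `K`
is corrected by an element of `K = φ(K)`.
-/

open Function

namespace Subgroup

variable {G : Type*} [Group G]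

theorem map_eq_self_of_coHopfian {K : Subgroup G}
    (hK : ∀ ψ : K →* K, Injective ψ → Surjective ψ)
    {φ : G →* G} (hφ : Injective φ) (hmap : K.map φ ≤ K) : K.map φ = K := by
  have hmaps : Set.MapsTo φ K K := fun x hx => hmap ⟨x, hx, rfl⟩
  refine le_antisymm hmap fun k hk => ?_
  obtain ⟨x, hx⟩ := hK (φ.restrict (M' := K.toSubmonoid) (N' := K.toSubmonoid) hmaps)
    (φ.restrict_injective hmaps hφ) ⟨k, hk⟩
  exact ⟨x, x.2, congrArg Subtype.val hx⟩

end Subgroup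

namespace QuotientGroup

variable {G G' : Type*} [Group G] [Group G'] {N : Subgroup G} [N.Normal]
  {M : Subgroup G'} [M.Normal] {f : G →* G'}

theorem map_injective_of_map_eq (hf : Injective f) (hNM : N.map f = M) :
    Injective (map N M f (hNM ▸ Subgroup.le_comap_map f N)) := by
  rw [← MonoidHom.ker_eq_bot_iff, ker_map, ← hNM,
    Subgroup.comap_map_eq_self_of_injective hf, map_mk'_self]

theorem surjective_of_map_surjective (h : N ≤ M.comap f) (hsurj : Surjective (map N M f h))
    (hM : M ≤ f.range) : Surjective f := by
  intro y
  obtain ⟨q, hq⟩ := hsurj y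
  obtain ⟨x, rfl⟩ := mk_surjective q
  obtain ⟨z, hz⟩ := hM (QuotientGroup.eq.mp hq : (f x)⁻¹ * y ∈ M)
  exact ⟨x * z, by rw [map_mul, hz, mul_inv_cancel_left]⟩

end QuotientGroup

/-- Let `H` be a group and `K` a normal subgroup of `H` that is injectively characteristic.
If both `K` and `H / K` are co-Hopfian, then `H` is co-Hopfian. -/
theorem coHopfian_of_injectively_characteristic {H : Type*} [Group H] (K : Subgroup H)
    [K.Normal]
    (hchar : ∀ φ : H →* H, Function.Injective φ → K.map φ ≤ K)
    (hK : ∀ ψ : K →* K, Function.Injective ψ → Function.Surjective ψ)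
    (hQ : ∀ ψ : H ⧸ K →* H ⧸ K, Function.Injective ψ → Function.Surjective ψ) :
    ∀ φ : H →* H, Function.Injective φ → Function.Surjective φ := by
  intro φ hφ
  have hKφ : K.map φ = K := Subgroup.map_eq_self_of_coHopfian hK hφ (hchar φ hφ)
  exact QuotientGroup.surjective_of_map_surjective _
    (hQ _ (QuotientGroup.map_injective_of_map_eq hφ hKφ)) (hKφ ▸ K.map_le_range φ)
end
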